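/- Let T, U be closed subspaces of H with cos(φ_{T,U}) > 0 and (u_j) a frame for U with analysis operator U*. For d ∈ ℓ², the least squares problem argmin_{g ∈ T} ‖U* g − d‖² has a unique solution in T. -/

import Mathlib

/-!
For `g ∈ T`, the analysis operator only sees `P_U g`, so the lower frame bound and the definition
of the angle give `‖U* g‖ ≥ √A ‖P_U g‖ ≥ √A cos(φ_{T,U}) ‖g‖`. Hence `U*` is bounded below on the
complete space `T`: its image `U*(T)` is a complete subspace of `ℓ²` and `U*` is injective on `T`.
The minimizers are the preimages in `T` of the orthogonal projection of `d` onto `U*(T)`.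
-/

noncomputable section
open scoped InnerProductSpace ENNReal

/-- The sequence space ℓ²(ℕ). -/
abbrev Lp2 : Type := lp (fun _ : ℕ => ℂ) 2

/-- `u` is a frame for the subspace `U` with frame bounds `A` and `B`:
`A‖f‖² ≤ Σ_j |⟨f,u_j⟩|² ≤ B‖f‖²` for all `f ∈ U`, and all `u_j ∈ U`. -/
def IsFrameFor {H : Type} [NormedAddCommGroup H] [InnerProductSpace ℂ H]
    (u : ℕ → H) (U : Submodule ℂ H) (A B : ℝ) : Prop :=
  (∀ j, u j ∈ U) ∧
    ∀ f ∈ U, A * ‖f‖ ^ 2 ≤ ∑' j, ‖⟪u j, f⟫_ℂ‖ ^ 2 ∧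
      ∑' j, ‖⟪u j, f⟫_ℂ‖ ^ 2 ≤ B * ‖f‖ ^ 2

/-- `cos(φ_{T,U}) = inf_{g ∈ T, ‖g‖=1} ‖P_U g‖` (orthogonal-projection form). -/
def cosAngleP {H : Type} [NormedAddCommGroup H] [InnerProductSpace ℂ H]
    [CompleteSpace H] (T U : Submodule ℂ H) [CompleteSpace U] : ℝ :=
  sInf {r : ℝ | ∃ g ∈ T, ‖g‖ = 1 ∧ r = ‖(U.orthogonalProjectionOnto g : H)‖}

/-- `cos(φ_{T,Y}) = inf_{g ∈ T, ‖g‖=1} sup_{v ∈ Y, ‖v‖=1} |⟨g,v⟩|` (inner-product form,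
for a general subset `Y`). -/
def cosAngleS {H : Type} [NormedAddCommGroup H] [InnerProductSpace ℂ H]
    (T : Submodule ℂ H) (Y : Set H) : ℝ :=
  sInf {r : ℝ | ∃ g ∈ T, ‖g‖ = 1 ∧
    r = sSup {s : ℝ | ∃ v ∈ Y, ‖v‖ = 1 ∧ s = ‖⟪g, v⟫_ℂ‖}}

theorem lp.norm_sq_eq_tsum_norm_sq {ι : Type*} {G : ι → Type*} [∀ i, NormedAddCommGroup (G i)]
    (f : lp G 2) : ‖f‖ ^ 2 = ∑' i, ‖f i‖ ^ 2 := by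
  have h := lp.norm_rpow_eq_tsum (by norm_num : (0 : ℝ) < (2 : ℝ≥0∞).toReal) f
  norm_num at h
  exact_mod_cast h

section LeastSquares

variable {𝕜 E F : Type*} [RCLike 𝕜] [NormedAddCommGroup E] [NormedSpace 𝕜 E]
  [NormedAddCommGroup F] [InnerProductSpace 𝕜 F]

theorem Submodule.forall_norm_sub_le_iff_eq_starProjection (K : Submodule 𝕜 F)
    [K.HasOrthogonalProjection] {d w : F} (hw : w ∈ K) :
    (∀ x ∈ K, ‖w - d‖ ≤ ‖x - d‖) ↔ w = K.starProjection d := by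
  have hbdd : BddBelow (Set.range fun x : K => ‖d - x‖) := ⟨0, by
    rintro _ ⟨x, rfl⟩
    positivity⟩
  simp only [norm_sub_rev _ d]
  constructor
  · intro hmin
    have hinf : ‖d - w‖ = ⨅ x : K, ‖d - x‖ :=
      le_antisymm (le_ciInf fun x => hmin x x.2) (ciInf_le hbdd ⟨w, hw⟩)
    exact (K.eq_starProjection_of_mem_of_inner_eq_zero hw
      ((K.norm_eq_iInf_iff_inner_eq_zero hw).1 hinf)).symm
  · rintro rfl x hx
    rw [K.starProjection_minimal]
    exact ciInf_le hbdd ⟨x, hx⟩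

theorem ContinuousLinearMap.antilipschitzWith_restrict_of_lower_bound (S : E →L[𝕜] F)
    {T : Submodule 𝕜 E} {ε : ℝ} (hε : 0 < ε) (hS : ∀ g ∈ T, ε * ‖g‖ ≤ ‖S g‖) :
    AntilipschitzWith ε⁻¹.toNNReal (S ∘L T.subtypeL) :=
  ContinuousLinearMap.antilipschitz_of_bound _ fun g => by
    rw [Real.coe_toNNReal _ (inv_nonneg.2 hε.le), le_inv_mul_iff₀ hε]
    exact hS g g.2

theorem existsUnique_forall_norm_sub_le_of_lower_bound (S : E →L[𝕜] F) {T : Submodule 𝕜 E}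
    [CompleteSpace T] {ε : ℝ} (hε : 0 < ε) (hS : ∀ g ∈ T, ε * ‖g‖ ≤ ‖S g‖) (d : F) :
    ∃! g, g ∈ T ∧ ∀ h ∈ T, ‖S g - d‖ ≤ ‖S h - d‖ := by
  have hanti := S.antilipschitzWith_restrict_of_lower_bound hε hS
  set K := T.map (S : E →ₗ[𝕜] F)
  have hK : (K : Set F) = Set.range (S ∘L T.subtypeL) := by
    ext
    simp [K]
  have : CompleteSpace K :=
    (hK ▸ hanti.isComplete_range (S ∘L T.subtypeL).uniformContinuous).completeSpace_coe
  have hmin : ∀ g ∈ T, (∀ h ∈ T, ‖S g - d‖ ≤ ‖S h - d‖) ↔ S g = K.starProjection d := by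
    intro g hg
    rw [← K.forall_norm_sub_le_iff_eq_starProjection (w := S g) ⟨g, hg, rfl⟩]
    simp [K]
  obtain ⟨g, hgT, hg⟩ : K.starProjection d ∈ K := K.starProjection_apply_mem d
  refine ⟨g, ⟨hgT, (hmin g hgT).2 hg⟩, fun g' ⟨hg'T, hg'⟩ => ?_⟩
  have hSg : S g' = S g := ((hmin g' hg'T).1 hg').trans hg.symm
  exact congrArg Subtype.val (hanti.injective (a₁ := ⟨g', hg'T⟩) (a₂ := ⟨g, hgT⟩) hSg)

end LeastSquares

section Frames

variable {H : Type} [NormedAddCommGroup H] [InnerProductSpace ℂ H]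

theorem cosAngleP_mul_norm_le [CompleteSpace H] {T U : Submodule ℂ H} [CompleteSpace U]
    {g : H} (hg : g ∈ T) : cosAngleP T U * ‖g‖ ≤ ‖U.starProjection g‖ := by
  rcases eq_or_ne g 0 with rfl | hg0
  · simp
  have hng : 0 < ‖g‖ := norm_pos_iff.2 hg0
  have hbdd : BddBelow {r : ℝ | ∃ g ∈ T, ‖g‖ = 1 ∧ r = ‖(U.orthogonalProjectionOnto g : H)‖} :=
    ⟨0, by
      rintro r ⟨g, -, -, rfl⟩
      positivity⟩
  have hunit : cosAngleP T U ≤ ‖U.starProjection (((‖g‖⁻¹ : ℝ) : ℂ) • g)‖ :=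
    csInf_le hbdd ⟨_, T.smul_mem _ hg, by simp [norm_smul, hng.ne'], rfl⟩
  rw [map_smul, norm_smul] at hunit
  simp only [Complex.norm_real, norm_inv, norm_norm] at hunit
  rwa [le_inv_mul_iff₀ hng, mul_comm] at hunit

theorem IsFrameFor.sqrt_mul_norm_starProjection_le {U : Submodule ℂ H} [U.HasOrthogonalProjection]
    {u : ℕ → H} {A B : ℝ} (hframe : IsFrameFor u U A B) {S : H → Lp2}
    (hS : ∀ f j, S f j = ⟪u j, f⟫_ℂ) (f : H) : √A * ‖U.starProjection f‖ ≤ ‖S f‖ := by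
  have hinner : ∀ j, ⟪u j, f⟫_ℂ = ⟪u j, U.starProjection f⟫_ℂ := fun j => by
    rw [← U.inner_starProjection_left_eq_right, U.starProjection_eq_self_iff.2 (hframe.1 j)]
  have hsq : A * ‖U.starProjection f‖ ^ 2 ≤ ‖S f‖ ^ 2 := by
    rw [lp.norm_sq_eq_tsum_norm_sq]
    simpa only [hS, hinner] using (hframe.2 _ (U.starProjection_apply_mem f)).1
  calc √A * ‖U.starProjection f‖ = √(A * ‖U.starProjection f‖ ^ 2) := by
        rw [Real.sqrt_mul' _ (by positivity), Real.sqrt_sq (norm_nonneg _)]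
    _ ≤ √(‖S f‖ ^ 2) := Real.sqrt_le_sqrt hsq
    _ = ‖S f‖ := Real.sqrt_sq (norm_nonneg _)

end Frames

theorem least_squares_unique_solution_general
    {H : Type} [NormedAddCommGroup H] [InnerProductSpace ℂ H] [CompleteSpace H]
    (T U : Submodule ℂ H) [CompleteSpace T] [CompleteSpace U]
    (hangle : 0 < cosAngleP T U)
    (u : ℕ → H) (A B : ℝ) (hA : 0 < A) (hframe : IsFrameFor u U A B)
    (Ustar : H →L[ℂ] Lp2) (hUstar : ∀ f j, Ustar f j = ⟪u j, f⟫_ℂ)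
    (d : Lp2) :
    ∃! g : H, g ∈ T ∧ ∀ h ∈ T, ‖Ustar g - d‖ ≤ ‖Ustar h - d‖ := by
  refine existsUnique_forall_norm_sub_le_of_lower_bound Ustar
    (mul_pos (Real.sqrt_pos.2 hA) hangle) (fun g hg => ?_) d
  calc √A * cosAngleP T U * ‖g‖ = √A * (cosAngleP T U * ‖g‖) := mul_assoc _ _ _
    _ ≤ √A * ‖U.starProjection g‖ := by gcongr; exact cosAngleP_mul_norm_le hg
    _ ≤ ‖Ustar g‖ := hframe.sqrt_mul_norm_starProjection_le hUstar g

/-- With `cos(φ_{T,U}) > 0`, for every `d ∈ ℓ²` the least squares problem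
`argmin_{g ∈ T} ‖U*g − d‖` has a unique solution in `T`. -/
theorem least_squares_unique_solution
    {H : Type} [NormedAddCommGroup H] [InnerProductSpace ℂ H] [CompleteSpace H]
    (T U : Submodule ℂ H) [CompleteSpace T] [CompleteSpace U]
    (hangle : 0 < cosAngleP T U)
    (u : ℕ → H) (A B : ℝ) (hA : 0 < A) (hAB : A ≤ B) (hframe : IsFrameFor u U A B)
    (Ustar : H →L[ℂ] Lp2) (hUstar : ∀ f j, Ustar f j = ⟪u j, f⟫_ℂ)
    (d : Lp2) :
    ∃! g : H, g ∈ T ∧ ∀ h ∈ T, ‖Ustar g - d‖ ≤ ‖Ustar h - d‖ :=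
  least_squares_unique_solution_general T U hangle u A B hA hframe Ustar hUstar d
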